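/- Let h(t) be a real polynomial of degree s ≤ d with nonnegative coefficients satisfying Property (H), and suppose 2s ≤ d+1. If (p̃, q̃) is the symmetric decomposition of U_r^{d+1}h(t) with respect to d, then p̃ is real-rooted for every integer r with 2r ≥ d+1. -/

import Mathlib

open Polynomial

/-- The geometric polynomial `1 + t + ⋯ + t^{r-1}`. -/
noncomputable def geomPoly (r : ℕ) : ℝ[X] := ∑ j ∈ Finset.range r, X ^ j

/-- `sect r i f` is the polynomial `f^{⟨r,i⟩}` whose `n`-th coefficient is the `(r*n+i)`-th
coefficient of `f` (valid definition for `r ≥ 1`). -/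
noncomputable def sect (r i : ℕ) (f : ℝ[X]) : ℝ[X] :=
  ∑ n ∈ Finset.range (f.natDegree + 1), C (f.coeff (r * n + i)) * X ^ n

/-- The operator `U_r^D h = (h·(1+t+⋯+t^{r-1})^D)^{⟨r,0⟩}`. -/
noncomputable def Uop (r D : ℕ) (h : ℝ[X]) : ℝ[X] := sect r 0 (h * geomPoly r ^ D)

/-- `(p, q)` is the symmetric decomposition of `h` with respect to `d`. -/
def IsSymmDecomp (d : ℕ) (h p q : ℝ[X]) : Prop :=
  h = p + X * q ∧
  p.natDegree ≤ d ∧ (∀ i ≤ d, p.coeff i = p.coeff (d - i)) ∧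
  q.natDegree ≤ d - 1 ∧ (∀ i ≤ d - 1, q.coeff i = q.coeff (d - 1 - i))

/-- A real polynomial is real-rooted if it is zero or all of its complex roots are real. -/
def RealRooted (f : ℝ[X]) : Prop :=
  f = 0 ∨ ∀ z : ℂ, aeval z f = 0 → z.im = 0

/-- The real roots of `f`, with multiplicity, in weakly decreasing order. -/
noncomputable def descRoots (f : ℝ[X]) : List ℝ := (f.roots.sort (· ≤ ·)).reverse

/-- `Interlaces f g` means `f ⪯ g`: both are real-rooted and, unless one of them is zero,
the decreasingly ordered root lists `s` of `f` and `t` of `g` satisfy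
`⋯ ≤ s_2 ≤ t_2 ≤ s_1 ≤ t_1` (with `deg g = deg f` or `deg f + 1`). -/
def Interlaces (f g : ℝ[X]) : Prop :=
  RealRooted f ∧ RealRooted g ∧
  (f = 0 ∨ g = 0 ∨
    (((descRoots g).length = (descRoots f).length ∨
      (descRoots g).length = (descRoots f).length + 1) ∧
     (∀ i, (hf : i < (descRoots f).length) → (hg : i < (descRoots g).length) →
        (descRoots f).get ⟨i, hf⟩ ≤ (descRoots g).get ⟨i, hg⟩) ∧
     (∀ i, (hg : i + 1 < (descRoots g).length) → (hf : i < (descRoots f).length) →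
        (descRoots g).get ⟨i + 1, hg⟩ ≤ (descRoots f).get ⟨i, hf⟩)))

/-- The coefficient of `h` at an integer index, zero for negative indices. -/
noncomputable def coeffZ (h : ℝ[X]) (j : ℤ) : ℝ := if 0 ≤ j then h.coeff j.toNat else 0

/-- Property (H): `h_0 + ⋯ + h_i ≥ h_d + h_{d-1} + ⋯ + h_{d-i+1}` for all `i`. -/
def PropH (d : ℕ) (h : ℝ[X]) : Prop :=
  ∀ i : ℕ, ∑ j ∈ Finset.range i, coeffZ h ((d : ℤ) - j) ≤ ∑ j ∈ Finset.range (i + 1), h.coeff j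

/-- Property (S): `h_0 + ⋯ + h_i ≤ h_s + h_{s-1} + ⋯ + h_{s-i}` for all `i`. -/
def PropS (s : ℕ) (h : ℝ[X]) : Prop :=
  ∀ i : ℕ, ∑ j ∈ Finset.range (i + 1), h.coeff j ≤ ∑ j ∈ Finset.range (i + 1), coeffZ h ((s : ℤ) - j)


/-!
Let `g = 1 + t + ⋯ + t^{r-1}` and `h̃ = ∑_j h_j (t^j + t^{j+1} + ⋯ + t^{d-j})`. Because
`2s ≤ d + 1`, `(1 - t) h̃ = h - t^{d+1} h(1/t)`. Multiplying by `g^{d+1}`, using that `g` is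
palindromic and taking `r`-sections gives `(1 - t) U_r^d h̃ = U - t^{d+1} U(1/t)` for
`U = U_r^{d+1} h`, and the symmetric decomposition `U = p̃ + t q̃` turns the right-hand side into
`(1 - t) p̃`. Hence `p̃ = U_r^d h̃`.

The coefficients of `h̃` are nonnegative, increase up to `d/2`, decrease after it and vanish
beyond `d < 2r`, so `h̃_{v+r} h̃_u ≤ h̃_v h̃_{u+r}` for `u ≤ v`. Fix `z` with `Im z > 0` and let
`v_k` be the value at `z` of `(t^k F)^{⟨r,0⟩}`, `0 ≤ k < r`. Replacing `F` by `F g` replaces `v` by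
`T_k = ∑_{i ≥ k} v_i + z ∑_{i < k} v_i`, and this preserves the existence of arguments
`θ_0 ≤ ⋯ ≤ θ_{r-1} ≤ θ_0 + arg z` of the `v_k`: `T_k` is a sum of vectors in the sector
`[θ_k, θ_k + arg z]`, and `T_{k+1} = T_k + (z - 1) v_k` with `arg (z - 1) ∈ [arg z, π]` is
turned counterclockwise from `T_k`. For `F = h̃` the arguments are supplied by the inequality
above; as nonvanishing propagates too, `U_r^d h̃ = (h̃ g^d)^{⟨r,0⟩}` has no zero off the real line.
-/

open Finset ComplexConjugate Real

namespace Polynomial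

variable {R : Type*} [Semiring R]

theorem reflect_sum {ι : Type*} (N : ℕ) (s : Finset ι) (f : ι → R[X]) :
    reflect N (∑ i ∈ s, f i) = ∑ i ∈ s, reflect N (f i) :=
  map_sum (⟨⟨reflect N, reflect_zero⟩, fun f g => reflect_add f g N⟩ : R[X] →+ R[X]) f s

theorem reflect_pow {f : R[X]} {N : ℕ} (hf : f.natDegree ≤ N) (k : ℕ) :
    reflect (N * k) (f ^ k) = reflect N f ^ k := by
  induction k with
  | zero => simp [reflect_one]
  | succ k ih =>
    rw [pow_succ, pow_succ, Nat.mul_succ,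
      reflect_mul _ _ ((natDegree_pow_le_of_le k hf).trans_eq (mul_comm k N)) hf, ih]

end Polynomial

theorem coeff_geomPoly (r n : ℕ) : (geomPoly r).coeff n = if n < r then 1 else 0 := by
  simp [geomPoly, finsetSum_coeff, coeff_X_pow]

theorem natDegree_geomPoly_le (r : ℕ) : (geomPoly r).natDegree ≤ r - 1 :=
  natDegree_le_iff_coeff_eq_zero.2 fun n hn => by
    rw [coeff_geomPoly, if_neg (by omega)]

theorem reflect_geomPoly (r : ℕ) : reflect (r - 1) (geomPoly r) = geomPoly r := by
  ext n
  rw [coeff_reflect, coeff_geomPoly, coeff_geomPoly]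
  rcases le_or_gt n (r - 1) with hn | hn
  · rw [revAt_le hn]
    exact if_congr (by omega) rfl rfl
  · rw [revAt_eq_self_of_lt hn]

theorem reflect_mul_geomPoly_pow {r : ℕ} (hr : 0 < r) {f : ℝ[X]} {N : ℕ}
    (hf : f.natDegree ≤ N) :
    reflect N f * geomPoly r ^ N = reflect (r * N) (f * geomPoly r ^ N) := by
  have hdeg : (geomPoly r ^ N).natDegree ≤ (r - 1) * N :=
    (natDegree_pow_le_of_le N (natDegree_geomPoly_le r)).trans_eq (mul_comm _ _)
  rw [show r * N = N + (r - 1) * N by nth_rw 1 [← Nat.sub_add_cancel hr]; ring,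
    reflect_mul _ _ hf hdeg, reflect_pow (natDegree_geomPoly_le r), reflect_geomPoly]

theorem X_pow_mul_geomPoly {r k : ℕ} (hk : k ≤ r) :
    X ^ k * geomPoly r = ∑ i ∈ Ico k r, X ^ i + X ^ r * ∑ i ∈ range k, X ^ i := by
  have hshift : ∀ m, ∑ j ∈ range m, (X : ℝ[X]) ^ (k + j) = ∑ i ∈ Ico k (k + m), X ^ i :=
    fun m => by rw [sum_Ico_eq_sum_range, Nat.add_sub_cancel_left]
  simp only [geomPoly, mul_sum, ← pow_add]
  rw [hshift, ← sum_Ico_consecutive _ hk (by omega : r ≤ k + r),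
    sum_Ico_eq_sum_range (m := r), show k + r - r = k by omega]

section Sect

variable {r : ℕ} (hr : 0 < r)
include hr

theorem coeff_sect (i : ℕ) (f : ℝ[X]) (n : ℕ) :
    (sect r i f).coeff n = f.coeff (r * n + i) := by
  rw [sect, finsetSum_coeff]
  simp only [coeff_C_mul_X_pow]
  rw [sum_ite_eq]
  split_ifs with hn
  · rfl
  · refine (coeff_eq_zero_of_natDegree_lt ?_).symm
    rw [mem_range, not_lt] at hn
    nlinarith

theorem sect_add (i : ℕ) (f g : ℝ[X]) : sect r i (f + g) = sect r i f + sect r i g := by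
  ext n; simp only [coeff_sect hr, coeff_add]

theorem sect_sub (i : ℕ) (f g : ℝ[X]) : sect r i (f - g) = sect r i f - sect r i g := by
  ext n; simp only [coeff_sect hr, coeff_sub]

theorem sect_sum {ι : Type*} (i : ℕ) (s : Finset ι) (f : ι → ℝ[X]) :
    sect r i (∑ j ∈ s, f j) = ∑ j ∈ s, sect r i (f j) := by
  ext n; simp only [coeff_sect hr, finsetSum_coeff]

theorem sect_X_pow_mul {i : ℕ} (hi : i < r) (f : ℝ[X]) :
    sect r i (X ^ r * f) = X * sect r i f := by
  ext n
  rw [coeff_sect hr, coeff_X_pow_mul']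
  rcases n with _ | n
  · simp [hi.not_ge]
  · rw [coeff_X_mul, coeff_sect hr, if_pos (by nlinarith)]
    congr 1
    rw [Nat.mul_succ]
    omega

theorem sect_reflect (N : ℕ) (f : ℝ[X]) :
    sect r 0 (reflect (r * N) f) = reflect N (sect r 0 f) := by
  ext n
  rw [coeff_sect hr, coeff_reflect, coeff_reflect, coeff_sect hr, add_zero, add_zero]
  rcases le_or_gt n N with hn | hn
  · rw [revAt_le hn, revAt_le (Nat.mul_le_mul_left r hn), Nat.mul_sub]
  · rw [revAt_eq_self_of_lt hn, revAt_eq_self_of_lt]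
    exact Nat.mul_lt_mul_of_pos_left hn hr

theorem sect_X_pow_mul_mul_geomPoly {k : ℕ} (hk : k ≤ r) (f : ℝ[X]) :
    sect r 0 (X ^ k * (f * geomPoly r)) =
      ∑ i ∈ Ico k r, sect r 0 (X ^ i * f) + X * ∑ i ∈ range k, sect r 0 (X ^ i * f) := by
  have : X ^ k * (f * geomPoly r) =
      ∑ i ∈ Ico k r, X ^ i * f + X ^ r * ∑ i ∈ range k, X ^ i * f := by
    rw [← sum_mul, ← sum_mul, mul_left_comm, X_pow_mul_geomPoly hk]
    ring
  rw [this, sect_add hr, sect_sum hr, sect_X_pow_mul hr hr, sect_sum hr]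

theorem sect_of_natDegree_lt {f : ℝ[X]} (hf : f.natDegree < 2 * r) :
    sect r 0 f = C (f.coeff 0) + C (f.coeff r) * X := by
  ext n
  rw [coeff_sect hr, add_zero, coeff_add, coeff_C, coeff_C_mul_X]
  rcases n with _ | _ | n
  · simp
  · simp
  · rw [coeff_eq_zero_of_natDegree_lt (by nlinarith)]
    simp

theorem sect_X_pow_mul_of_natDegree_lt {f : ℝ[X]} (hf : f.natDegree < 2 * r) {k : ℕ}
    (hk : 0 < k) (hkr : k < r) :
    sect r 0 (X ^ k * f) = X * (C (f.coeff (r - k)) + C (f.coeff (r - k + r)) * X) := by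
  ext n
  rw [coeff_sect hr, add_zero, coeff_X_pow_mul']
  rcases n with _ | _ | _ | n
  · simp [hk.ne']
  · simp [hkr.le]
  · simp [mul_comm r 2, show k ≤ 2 * r by omega, show 2 * r - k = r - k + r by omega]
  · have h3 : 3 * r ≤ r * (n + 1 + 1 + 1) := by nlinarith
    rw [if_pos (by omega), coeff_eq_zero_of_natDegree_lt (by omega), coeff_X_mul]
    simp

theorem natDegree_Uop_le {d : ℕ} {h : ℝ[X]} (hh : h.natDegree ≤ d) :
    (Uop r (d + 1) h).natDegree ≤ d :=
  natDegree_le_iff_coeff_eq_zero.2 fun n hn => by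
    rw [Uop, coeff_sect hr, add_zero]
    refine coeff_eq_zero_of_natDegree_lt ?_
    calc (h * geomPoly r ^ (d + 1)).natDegree ≤ d + (d + 1) * (r - 1) :=
          natDegree_mul_le.trans
            (add_le_add hh (natDegree_pow_le_of_le _ (natDegree_geomPoly_le r)))
      _ < r * (d + 1) := by
          obtain ⟨r, rfl⟩ := Nat.exists_eq_add_of_lt hr
          simp only [zero_add, Nat.add_sub_cancel]
          nlinarith
      _ ≤ r * n := Nat.mul_le_mul_left r hn

end Sect

noncomputable def symmetrization (d : ℕ) (h : ℝ[X]) : ℝ[X] :=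
  ∑ j ∈ range (d + 1), C (h.coeff j) * ∑ k ∈ Ico j (d + 1 - j), X ^ k

section Symmetrization

variable (d : ℕ) {h : ℝ[X]}

theorem coeff_symmetrization (h : ℝ[X]) (m : ℕ) :
    (symmetrization d h).coeff m =
      ∑ j ∈ range (d + 1), if j ≤ m ∧ m + j ≤ d then h.coeff j else 0 := by
  simp only [symmetrization, finsetSum_coeff, coeff_C_mul, coeff_X_pow, sum_ite_eq, mem_Ico]
  refine sum_congr rfl fun j _ => ?_
  rw [mul_ite, mul_one, mul_zero]
  exact if_congr (by omega) rfl rfl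

theorem natDegree_symmetrization_le (h : ℝ[X]) : (symmetrization d h).natDegree ≤ d :=
  natDegree_le_iff_coeff_eq_zero.2 fun m hm => by
    rw [coeff_symmetrization]
    exact sum_eq_zero fun j _ => if_neg (by omega)

theorem symmetrization_mul_one_sub_X (hh : 2 * h.natDegree ≤ d + 1) :
    symmetrization d h * (1 - X) = h - reflect (d + 1) h := by
  have hsum : h = ∑ j ∈ range (d + 1), C (h.coeff j) * X ^ j :=
    h.as_sum_range_C_mul_X_pow' (by omega)
  conv_rhs => rw [hsum, reflect_sum, ← sum_sub_distrib]
  rw [symmetrization, sum_mul]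
  refine sum_congr rfl fun j hj => ?_
  rw [reflect_C_mul_X_pow, revAt_le (by simp at hj; omega), mul_assoc, ← mul_sub]
  rcases le_or_gt j h.natDegree with hjh | hjh
  · rw [geom_sum_Ico_mul_neg _ (by omega)]
  · simp [coeff_eq_zero_of_natDegree_lt hjh]

variable {d} (hnn : ∀ i, 0 ≤ h.coeff i)
include hnn

theorem coeff_symmetrization_nonneg (m : ℕ) : 0 ≤ (symmetrization d h).coeff m := by
  rw [coeff_symmetrization]
  exact sum_nonneg fun j _ => by split_ifs <;> simp [hnn]

theorem coeff_symmetrization_mono {u v : ℕ} (huv : u ≤ v) (hv : 2 * v ≤ d) :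
    (symmetrization d h).coeff u ≤ (symmetrization d h).coeff v := by
  rw [coeff_symmetrization, coeff_symmetrization]
  refine sum_le_sum fun j _ => ?_
  split_ifs <;> first | exact hnn j | exact le_rfl | omega

theorem coeff_symmetrization_anti {u v : ℕ} (hu : d ≤ 2 * u) (huv : u ≤ v) :
    (symmetrization d h).coeff v ≤ (symmetrization d h).coeff u := by
  rw [coeff_symmetrization, coeff_symmetrization]
  refine sum_le_sum fun j _ => ?_
  split_ifs <;> first | exact hnn j | exact le_rfl | omega

theorem coeff_symmetrization_cross {r : ℕ} (hr : d + 1 ≤ 2 * r) {u v : ℕ} (huv : u ≤ v) :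
    (symmetrization d h).coeff (v + r) * (symmetrization d h).coeff u ≤
      (symmetrization d h).coeff v * (symmetrization d h).coeff (u + r) := by
  have hpos := coeff_symmetrization_nonneg (d := d) hnn
  rcases lt_or_ge d (v + r) with hd | hd
  · rw [coeff_eq_zero_of_natDegree_lt ((natDegree_symmetrization_le d h).trans_lt hd), zero_mul]
    exact mul_nonneg (hpos v) (hpos (u + r))
  · rw [mul_comm ((symmetrization d h).coeff v)]
    exact mul_le_mul (coeff_symmetrization_anti hnn (by omega) (by omega))
      (coeff_symmetrization_mono hnn huv (by omega)) (hpos u) (hpos _)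

end Symmetrization

/-- Reflecting `p + X q` in degree `d + 1` gives `X p + X q`. -/
theorem IsSymmDecomp.one_sub_X_mul {d : ℕ} {u p q : ℝ[X]} (hpq : IsSymmDecomp d u p q)
    (hu : u.natDegree ≤ d) : (1 - X) * p = u - reflect (d + 1) u := by
  obtain ⟨rfl, hp, hps, hq, hqs⟩ := hpq
  have htop : (p + X * q).coeff (d + 1) = 0 := coeff_eq_zero_of_natDegree_lt (by omega)
  ext n
  rw [sub_mul, one_mul, coeff_sub, coeff_sub, coeff_reflect]
  rcases n with _ | m
  · simp [htop]
  rcases lt_trichotomy (m + 1) (d + 1) with hm | hm | hm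
  · rw [revAt_le hm.le, show d + 1 - (m + 1) = (d - m - 1) + 1 by omega]
    simp only [coeff_add, coeff_X_mul]
    rw [hps m (by omega), hqs m (by omega), show d - 1 - m = d - m - 1 by omega,
      show d - m - 1 + 1 = d - m by omega]
    ring
  · rw [hm, revAt_le le_rfl, Nat.sub_self, htop, ← hm]
    simp only [coeff_add, coeff_X_mul, mul_coeff_zero, coeff_X_zero, zero_mul, add_zero]
    rw [coeff_eq_zero_of_natDegree_lt (by omega : p.natDegree < m + 1), hps 0 (by omega)]
    simp [show m = d by omega]
  · rw [revAt_eq_self_of_lt hm, coeff_X_mul,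
      coeff_eq_zero_of_natDegree_lt (by omega : p.natDegree < m + 1),
      coeff_eq_zero_of_natDegree_lt (by omega : p.natDegree < m)]
    ring

theorem one_sub_X_mul_Uop_symmetrization {r : ℕ} (hr : 0 < r) {d : ℕ} {h : ℝ[X]}
    (hh : 2 * h.natDegree ≤ d + 1) :
    (1 - X) * Uop r d (symmetrization d h) =
      Uop r (d + 1) h - reflect (d + 1) (Uop r (d + 1) h) := by
  have hgeom : geomPoly r * (1 - X) = 1 - X ^ r := geom_sum_mul_neg X r
  calc (1 - X) * Uop r d (symmetrization d h)
      = sect r 0 (symmetrization d h * geomPoly r ^ d * (1 - X ^ r)) := by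
        rw [Uop, mul_one_sub, sect_sub hr, mul_comm _ (X ^ r), sect_X_pow_mul hr hr, one_sub_mul]
    _ = sect r 0 (h * geomPoly r ^ (d + 1) -
          reflect (r * (d + 1)) (h * geomPoly r ^ (d + 1))) := by
        rw [← reflect_mul_geomPoly_pow hr (by omega), ← sub_mul,
          ← symmetrization_mul_one_sub_X d hh, ← hgeom]
        ring_nf
    _ = _ := by rw [sect_sub hr, sect_reflect hr]; rfl

theorem IsSymmDecomp.eq_Uop_symmetrization {r : ℕ} (hr : 0 < r) {d : ℕ} {h p q : ℝ[X]}
    (hh : 2 * h.natDegree ≤ d + 1) (hpq : IsSymmDecomp d (Uop r (d + 1) h) p q) :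
    p = Uop r d (symmetrization d h) := by
  have hne : (1 - X : ℝ[X]) ≠ 0 := by
    rw [← neg_sub, neg_ne_zero, ← C_1]
    exact X_sub_C_ne_zero 1
  exact mul_left_cancel₀ hne <| (hpq.one_sub_X_mul (natDegree_Uop_le hr (by omega))).trans
    (one_sub_X_mul_Uop_symmetrization hr hh).symm

theorem Real.nonneg_of_sin_nonneg {x : ℝ} (hx : -π < x) (hsin : 0 ≤ Real.sin x) :
    0 ≤ x :=
  not_lt.1 fun hneg => (Real.sin_neg_of_neg_of_neg_pi_lt hneg hx).not_ge hsin

namespace Complex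

theorem ofReal_mul_exp_mul_conj (ρ φ ρ' φ' : ℝ) :
    (ρ : ℂ) * exp (φ * I) * conj ((ρ' : ℂ) * exp (φ' * I)) =
      ((ρ * ρ' : ℝ) : ℂ) * exp ((φ - φ' : ℝ) * I) := by
  rw [map_mul, conj_ofReal, ← exp_conj, map_mul, conj_ofReal, conj_I, ofReal_sub, sub_mul,
    exp_sub, mul_neg, exp_neg, ofReal_mul]
  ring

theorem im_ofReal_mul_exp_mul_conj (ρ φ ρ' φ' : ℝ) :
    ((ρ : ℂ) * exp (φ * I) * conj ((ρ' : ℂ) * exp (φ' * I))).im =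
      ρ * ρ' * Real.sin (φ - φ') := by
  rw [ofReal_mul_exp_mul_conj, im_ofReal_mul, exp_ofReal_mul_I_im]

theorem re_ofReal_mul_exp_mul_conj (ρ φ ρ' φ' : ℝ) :
    ((ρ : ℂ) * exp (φ * I) * conj ((ρ' : ℂ) * exp (φ' * I))).re =
      ρ * ρ' * Real.cos (φ - φ') := by
  rw [ofReal_mul_exp_mul_conj, re_ofReal_mul, exp_ofReal_mul_I_re]

theorem im_ofReal_mul_exp_mul_conj_exp (ρ φ ψ : ℝ) :
    ((ρ : ℂ) * exp (φ * I) * conj (exp (ψ * I))).im = ρ * Real.sin (φ - ψ) := by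
  simpa using im_ofReal_mul_exp_mul_conj ρ φ 1 ψ

theorem re_ofReal_mul_exp_mul_conj_exp (ρ φ ψ : ℝ) :
    ((ρ : ℂ) * exp (φ * I) * conj (exp (ψ * I))).re = ρ * Real.cos (φ - ψ) := by
  simpa using re_ofReal_mul_exp_mul_conj ρ φ 1 ψ

theorem im_exp_mul_conj_ofReal_mul_exp (ψ ρ φ : ℝ) :
    (exp (ψ * I) * conj ((ρ : ℂ) * exp (φ * I))).im = ρ * Real.sin (ψ - φ) := by
  simpa using im_ofReal_mul_exp_mul_conj 1 ψ ρ φ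

theorem le_of_im_ofReal_mul_exp_mul_conj_nonneg {ρ φ ρ' φ' : ℝ} (hρ : 0 < ρ)
    (hρ' : 0 < ρ') (hφ : φ' - φ < π)
    (h : 0 ≤ ((ρ : ℂ) * exp (φ * I) * conj ((ρ' : ℂ) * exp (φ' * I))).im) :
    φ' ≤ φ := by
  rw [im_ofReal_mul_exp_mul_conj] at h
  exact sub_nonneg.1 (Real.nonneg_of_sin_nonneg (by linarith)
    (nonneg_of_mul_nonneg_right h (mul_pos hρ hρ')))

theorem arg_le_arg_of_im_mul_conj_nonneg {w w' : ℂ} (hw : w ≠ 0) (hw' : w' ≠ 0)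
    (hlt : arg w' - arg w < π) (h : 0 ≤ (w * conj w').im) : arg w' ≤ arg w := by
  rw [← norm_mul_exp_arg_mul_I w, ← norm_mul_exp_arg_mul_I w'] at h
  exact le_of_im_ofReal_mul_exp_mul_conj_nonneg (norm_pos_iff.2 hw) (norm_pos_iff.2 hw') hlt h

theorem mul_ofReal_mul_exp (w : ℂ) (ρ θ : ℝ) :
    w * (ρ * exp (θ * I)) = ((‖w‖ * ρ : ℝ) : ℂ) * exp ((θ + arg w : ℝ) * I) := by
  conv_lhs => rw [← norm_mul_exp_arg_mul_I w]
  push_cast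
  rw [add_mul, Complex.exp_add]
  ring

theorem ofReal_add_ofReal_mul_eq_zero {z : ℂ} (hz : z.im ≠ 0) {a b : ℝ}
    (h : (a + b * z : ℂ) = 0) : a = 0 ∧ b = 0 := by
  have hb : b = 0 := by simpa [hz] using congrArg im h
  subst hb
  simpa using h

section UpperHalfPlane

variable {z : ℂ} (hz : 0 < z.im)
include hz

theorem ne_zero_of_im_pos : z ≠ 0 := fun h => by simp [h] at hz

theorem arg_pos_of_im_pos : 0 < arg z :=
  (arg_nonneg_iff.2 hz.le).lt_of_ne fun h => hz.ne' (arg_eq_zero_iff.1 h.symm).2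

theorem arg_lt_pi_of_im_pos : arg z < π :=
  arg_lt_pi_iff.2 (Or.inr hz.ne')

theorem arg_ofReal_add_ofReal_mul_mem_Icc {a b : ℝ} (ha : 0 ≤ a) (hb : 0 ≤ b)
    (hw : (a + b * z : ℂ) ≠ 0) : arg (a + b * z) ∈ Set.Icc 0 (arg z) := by
  refine ⟨arg_nonneg_iff.2 (by simpa using mul_nonneg hb hz.le), ?_⟩
  refine arg_le_arg_of_im_mul_conj_nonneg (ne_zero_of_im_pos hz) hw
    (by linarith [arg_le_pi (a + b * z), arg_pos_of_im_pos hz]) ?_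
  have : (z * conj (a + b * z)).im = a * z.im := by
    simp only [mul_im, map_add, map_mul, conj_ofReal, add_re, add_im, mul_re, ofReal_re,
      ofReal_im, conj_re, conj_im]
    ring
  rw [this]
  exact mul_nonneg ha hz.le

theorem arg_ofReal_add_ofReal_mul_le_arg {a b a' b' : ℝ} (ha : 0 ≤ a) (hb : 0 ≤ b)
    (ha' : 0 ≤ a') (hb' : 0 ≤ b') (hcross : b * a' ≤ a * b') (hw : (a + b * z : ℂ) ≠ 0)
    (hw' : (a' + b' * z : ℂ) ≠ 0) : arg (a + b * z) ≤ arg (a' + b' * z) := by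
  have h := arg_ofReal_add_ofReal_mul_mem_Icc hz ha hb hw
  have h' := arg_ofReal_add_ofReal_mul_mem_Icc hz ha' hb' hw'
  refine arg_le_arg_of_im_mul_conj_nonneg hw' hw
    (by linarith [arg_lt_pi_of_im_pos hz, h.2, h'.1]) ?_
  have : ((a' + b' * z) * conj (a + b * z)).im = (a * b' - a' * b) * z.im := by
    simp only [mul_im, map_add, map_mul, conj_ofReal, add_re, add_im, mul_re, ofReal_re,
      ofReal_im, conj_re, conj_im]
    ring
  rw [this]
  exact mul_nonneg (by linarith) hz.le

theorem arg_le_arg_sub_one : arg z ≤ arg (z - 1) := by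
  have hz1 : 0 < (z - 1).im := by simpa using hz
  simpa using (arg_ofReal_add_ofReal_mul_mem_Icc hz1 zero_le_one zero_le_one
    (by simpa using ne_zero_of_im_pos hz)).2

end UpperHalfPlane

end Complex

open Complex

def OnRay (θ : ℝ) (w : ℂ) : Prop := ∃ ρ : ℝ, 0 ≤ ρ ∧ w = ρ * exp (θ * I)

/-- The three conditions are `ℝ`-linear in `w` and cut out the closed sector between the
directions `a` and `b`, so they pass to sums (`exists_sum_eq_polar_of_onRay`). -/
theorem exists_polar_of_im_nonneg_of_re_pos {w : ℂ} {a b : ℝ} (hab : a ≤ b) (hba : b - a < π)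
    (hlo : 0 ≤ (w * conj (exp (a * I))).im) (hhi : 0 ≤ (exp (b * I) * conj w).im)
    (hmid : 0 < (w * conj (exp (((a + b) / 2 : ℝ) * I))).re) :
    ∃ ρ : ℝ, 0 < ρ ∧ ∃ φ ∈ Set.Icc a b, w = ρ * exp (φ * I) := by
  set u := w * conj (exp (((a + b) / 2 : ℝ) * I)) with hu_def
  have hu := abs_lt.1 (abs_arg_lt_pi_div_two_iff.2 (Or.inl hmid))
  have hpos : 0 < ‖u‖ := norm_pos_iff.2 fun h => by simp [h] at hmid
  have hw : w = ‖u‖ * exp ((arg u + (a + b) / 2 : ℝ) * I) := by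
    rw [ofReal_add, add_mul, Complex.exp_add, ← mul_assoc, norm_mul_exp_arg_mul_I, hu_def,
      mul_assoc, conj_mul', norm_exp_ofReal_mul_I, ofReal_one, one_pow, mul_one]
  rw [hw, im_ofReal_mul_exp_mul_conj_exp] at hlo
  rw [hw, im_exp_mul_conj_ofReal_mul_exp] at hhi
  refine ⟨‖u‖, hpos, _, ⟨?_, ?_⟩, hw⟩
  · linarith [Real.nonneg_of_sin_nonneg (by linarith) (nonneg_of_mul_nonneg_right hlo hpos)]
  · linarith [Real.nonneg_of_sin_nonneg (by linarith) (nonneg_of_mul_nonneg_right hhi hpos)]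

theorem exists_sum_eq_polar_of_onRay {ι : Type*} {s : Finset ι} {c : ι → ℂ} {a b : ℝ}
    (hab : b - a < π) (hc : ∀ t ∈ s, ∃ φ ∈ Set.Icc a b, OnRay φ (c t))
    (hne : ∃ t ∈ s, c t ≠ 0) :
    ∃ ρ : ℝ, 0 < ρ ∧ ∃ φ ∈ Set.Icc a b, ∑ t ∈ s, c t = ρ * exp (φ * I) := by
  choose φ hφ ρ hρ hcρ using hc
  obtain ⟨t₀, ht₀, hct₀⟩ := hne
  have hab' : a ≤ b := (hφ t₀ ht₀).1.trans (hφ t₀ ht₀).2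
  refine exists_polar_of_im_nonneg_of_re_pos hab' hab ?_ ?_ ?_
  · rw [sum_mul, im_sum]
    refine sum_nonneg fun t ht => ?_
    rw [hcρ t ht, im_ofReal_mul_exp_mul_conj_exp]
    exact mul_nonneg (hρ t ht) (Real.sin_nonneg_of_nonneg_of_le_pi (by linarith [(hφ t ht).1])
      (by linarith [(hφ t ht).2]))
  · rw [map_sum, mul_sum, im_sum]
    refine sum_nonneg fun t ht => ?_
    rw [hcρ t ht, im_exp_mul_conj_ofReal_mul_exp]
    exact mul_nonneg (hρ t ht) (Real.sin_nonneg_of_nonneg_of_le_pi (by linarith [(hφ t ht).2])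
      (by linarith [(hφ t ht).1]))
  · have hcos : ∀ t (ht : t ∈ s), 0 < Real.cos (φ t ht - (a + b) / 2) := fun t ht =>
      Real.cos_pos_of_mem_Ioo ⟨by linarith [(hφ t ht).1, (hφ t ht).2],
        by linarith [(hφ t ht).1, (hφ t ht).2]⟩
    rw [sum_mul, re_sum]
    refine sum_pos' (fun t ht => ?_) ⟨t₀, ht₀, ?_⟩
    · rw [hcρ t ht, re_ofReal_mul_exp_mul_conj_exp]
      exact mul_nonneg (hρ t ht) (hcos t ht).le
    · rw [hcρ t₀ ht₀, re_ofReal_mul_exp_mul_conj_exp]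
      refine mul_pos ((hρ t₀ ht₀).lt_of_ne fun h => hct₀ ?_) (hcos t₀ ht₀)
      rw [hcρ t₀ ht₀, ← h, ofReal_zero, zero_mul]

theorem exists_antitone_onRay {w : ℕ → ℂ} {b : ℝ} (hb : 0 ≤ b)
    (harg : ∀ u, w u ≠ 0 → arg (w u) ∈ Set.Icc 0 b)
    (hanti : ∀ u v, u ≤ v → w u ≠ 0 → w v ≠ 0 → arg (w v) ≤ arg (w u)) :
    ∃ α : ℕ → ℝ, Antitone α ∧ (∀ u, α u ∈ Set.Icc 0 b) ∧
      ∀ u, OnRay (α u) (w u) := by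
  classical
  -- zero entries get the largest admissible angle, which does not disturb the running minimum
  set g : ℕ → ℝ := fun u => if w u = 0 then b else arg (w u)
  have hg : ∀ u, g u ∈ Set.Icc 0 b := fun u => by
    by_cases hu : w u = 0
    · simp [g, hu, hb]
    · simpa [g, hu] using harg u hu
  refine ⟨fun u => (range (u + 1)).inf' nonempty_range_add_one g, fun u v huv => ?_,
    fun u => ⟨le_inf' _ _ fun i _ => (hg i).1,
      (inf'_le _ (self_mem_range_succ _)).trans (hg u).2⟩,
    fun u => ?_⟩
  · exact inf'_mono _ (range_subset_range.2 (by omega)) _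
  by_cases hu : w u = 0
  · exact ⟨0, le_rfl, by simp [hu]⟩
  refine ⟨‖w u‖, norm_nonneg _, ?_⟩
  have : (range (u + 1)).inf' nonempty_range_add_one g = arg (w u) := by
    refine le_antisymm ((inf'_le _ (self_mem_range_succ _)).trans_eq (if_neg hu))
      (le_inf' _ _ fun i hi => ?_)
    by_cases hi0 : w i = 0
    · simpa [g, hi0] using (harg u hu).2
    · simpa [g, hi0] using hanti i u (by simpa [Nat.lt_succ_iff] using hi) hi0 hu
  simp only [this, norm_mul_exp_arg_mul_I]

theorem phase_le_of_eq_add_sub_one_mul {z : ℂ} (hz : 0 < z.im) {T T' v : ℂ}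
    {θ φ φ' P P' : ℝ} (hP : 0 < P) (hP' : 0 < P') (hT : T = P * exp (φ * I))
    (hT' : T' = P' * exp (φ' * I)) (hv : OnRay θ v) (hθφ : θ ≤ φ) (hφθ : φ ≤ θ + arg z)
    (hθφ' : θ ≤ φ')
    (hstep : T' = T + (z - 1) * v) : φ ≤ φ' := by
  obtain ⟨ρ, hρ, rfl⟩ := hv
  have hβ := arg_le_arg_sub_one hz
  have him : (T' * conj T).im = ‖z - 1‖ * ρ * P * Real.sin (θ + arg (z - 1) - φ) := by
    rw [hstep, add_mul, add_im, mul_conj, ofReal_im, zero_add, mul_ofReal_mul_exp, hT,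
      im_ofReal_mul_exp_mul_conj]
  refine le_of_im_ofReal_mul_exp_mul_conj_nonneg hP' hP
    (by linarith [arg_lt_pi_of_im_pos hz]) ?_
  rw [← hT, ← hT', him]
  exact mul_nonneg (by positivity) (Real.sin_nonneg_of_nonneg_of_le_pi (by linarith)
    (by linarith [arg_le_pi (z - 1)]))

/-- If `v k` is the value at `z` of `sect r 0 (X ^ k * F)` for `k < r`, then `sectionStep z r v k`
is that of `sect r 0 (X ^ k * (F * geomPoly r))` (`sect_X_pow_mul_mul_geomPoly`). -/
noncomputable def sectionStep (z : ℂ) (r : ℕ) (v : ℕ → ℂ) (k : ℕ) : ℂ :=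
  ∑ i ∈ Ico k r, v i + z * ∑ i ∈ range k, v i

theorem sectionStep_succ (z : ℂ) {r : ℕ} (v : ℕ → ℂ) {k : ℕ} (hk : k < r) :
    sectionStep z r v (k + 1) = sectionStep z r v k + (z - 1) * v k := by
  rw [sectionStep, sectionStep, sum_eq_sum_Ico_succ_bot hk, sum_range_succ]
  ring

theorem sectionStep_self (z : ℂ) (r : ℕ) (v : ℕ → ℂ) :
    sectionStep z r v r = z * sectionStep z r v 0 := by
  simp [sectionStep]

theorem sectionStep_eq_sum (z : ℂ) {r : ℕ} (v : ℕ → ℂ) {k : ℕ} (hk : k ≤ r) :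
    sectionStep z r v k = ∑ i ∈ range r, if i < k then z * v i else v i := by
  rw [sectionStep, ← sum_range_add_sum_Ico _ hk, add_comm, mul_sum]
  congr 1
  · exact sum_congr rfl fun i hi => (if_pos (mem_range.1 hi)).symm
  · exact sum_congr rfl fun i hi => (if_neg (mem_Ico.1 hi).1.not_gt).symm

def IsPhaseChain (z : ℂ) (r : ℕ) (v : ℕ → ℂ) : Prop :=
  ∃ θ : ℕ → ℝ, MonotoneOn θ (Set.Iio r) ∧ θ (r - 1) ≤ θ 0 + arg z ∧
    ∀ k < r, OnRay (θ k) (v k)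

theorem IsPhaseChain.congr {z : ℂ} {r : ℕ} {v w : ℕ → ℂ} (hv : IsPhaseChain z r v)
    (hvw : ∀ k < r, v k = w k) : IsPhaseChain z r w :=
  let ⟨θ, hmono, hwin, hray⟩ := hv
  ⟨θ, hmono, hwin, fun k hk => hvw k hk ▸ hray k hk⟩

theorem exists_sectionStep_eq_polar {z : ℂ} (hz : 0 < z.im) {r : ℕ} {v : ℕ → ℂ}
    {θ : ℕ → ℝ} (hmono : MonotoneOn θ (Set.Iio r)) (hwin : θ (r - 1) ≤ θ 0 + arg z)
    (hray : ∀ k < r, OnRay (θ k) (v k)) (hne : ∃ i < r, v i ≠ 0) {k : ℕ} (hk : k < r) :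
    ∃ P : ℝ, 0 < P ∧ ∃ φ ∈ Set.Icc (θ k) (θ k + arg z),
      sectionStep z r v k = P * exp (φ * I) := by
  obtain ⟨i₀, hi₀, hvi₀⟩ := hne
  have hθ : ∀ {i j}, i ≤ j → j < r → θ i ≤ θ j := fun hij hj =>
    hmono (Set.mem_Iio.2 (hij.trans_lt hj)) (Set.mem_Iio.2 hj) hij
  have hterms : ∀ i ∈ range r, ∃ φ ∈ Set.Icc (θ k) (θ k + arg z),
      OnRay φ (if i < k then z * v i else v i) := by
    intro i hi
    replace hi := mem_range.1 hi
    have hlast : θ k ≤ θ 0 + arg z := (hθ (by omega) (by omega)).trans hwin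
    split_ifs with hik
    · obtain ⟨ρ, hρ, hvi⟩ := hray i hi
      refine ⟨θ i + arg z,
        ⟨by linarith [hθ (Nat.zero_le i) hi], by linarith [hθ hik.le hk]⟩,
        ‖z‖ * ρ, by positivity, ?_⟩
      rw [hvi, mul_ofReal_mul_exp]
    · exact ⟨θ i, ⟨hθ (not_lt.1 hik) hi,
        by linarith [hθ (Nat.le_sub_one_of_lt hi) (Nat.sub_lt (by omega) one_pos),
          hθ (Nat.zero_le k) hk]⟩, hray i hi⟩
  rw [sectionStep_eq_sum z v hk.le]
  exact exists_sum_eq_polar_of_onRay (by linarith [arg_lt_pi_of_im_pos hz]) hterms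
    ⟨i₀, mem_range.2 hi₀, by split_ifs <;> simp [ne_zero_of_im_pos hz, hvi₀]⟩

theorem IsPhaseChain.step {z : ℂ} (hz : 0 < z.im) {r : ℕ} {v : ℕ → ℂ}
    (hv : IsPhaseChain z r v) (hne : ∃ i < r, v i ≠ 0) :
    IsPhaseChain z r (sectionStep z r v) ∧ ∀ k < r, sectionStep z r v k ≠ 0 := by
  obtain ⟨θ, hmono, hwin, hray⟩ := hv
  have hpolar : ∀ k, ∃ P φ : ℝ, k < r → 0 < P ∧ φ ∈ Set.Icc (θ k) (θ k + arg z) ∧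
      sectionStep z r v k = P * exp (φ * I) := fun k => by
    by_cases hk : k < r
    · obtain ⟨P, hP, φ, hφ, h⟩ := exists_sectionStep_eq_polar hz hmono hwin hray hne hk
      exact ⟨P, φ, fun _ => ⟨hP, hφ, h⟩⟩
    · exact ⟨1, 0, fun h => absurd h hk⟩
  choose P φ hPφ using hpolar
  have hr : 0 < r := let ⟨_, hi, _⟩ := hne; Nat.zero_lt_of_lt hi
  refine ⟨⟨φ, ?_, ?_, fun k hk => ⟨P k, (hPφ k hk).1.le, (hPφ k hk).2.2⟩⟩,
    fun k hk => ?_⟩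
  · refine monotoneOn_of_le_add_one Set.ordConnected_Iio fun k _ hk hk₁ => ?_
    obtain ⟨hP, hφ, hT⟩ := hPφ k hk
    obtain ⟨hP₁, hφ₁, hT₁⟩ := hPφ (k + 1) hk₁
    exact phase_le_of_eq_add_sub_one_mul hz hP hP₁ hT hT₁ (hray k hk) hφ.1 hφ.2
      ((hmono hk hk₁ k.le_succ).trans hφ₁.1) (sectionStep_succ z v hk)
  · -- as `sectionStep z r v r = z * sectionStep z r v 0`, the window is one more rotation step
    obtain ⟨hP₀, hφ₀, hT₀⟩ := hPφ 0 hr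
    obtain ⟨hP, hφ, hT⟩ := hPφ (r - 1) (by omega)
    refine phase_le_of_eq_add_sub_one_mul (T' := sectionStep z r v r) hz hP
      (mul_pos (norm_pos_iff.2 (ne_zero_of_im_pos hz)) hP₀) hT ?_
      (hray (r - 1) (by omega)) hφ.1 hφ.2 (by linarith [hφ₀.1]) ?_
    · rw [sectionStep_self, hT₀, mul_ofReal_mul_exp]
    · rw [← sectionStep_succ z v (by omega), Nat.sub_add_cancel hr]
  · rw [(hPφ k hk).2.2]
    exact mul_ne_zero (ofReal_ne_zero.2 (hPφ k hk).1.ne') (Complex.exp_ne_zero _)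

section Base

variable {r : ℕ} (hr : 0 < r) {f : ℝ[X]} (hf : f.natDegree < 2 * r)
include hr hf

theorem aeval_sect_X_pow_mul_of_natDegree_lt (z : ℂ) {k : ℕ} (hk : k < r) :
    aeval z (sect r 0 (X ^ k * f)) = if k = 0 then f.coeff 0 + f.coeff (0 + r) * z
      else z * (f.coeff (r - k) + f.coeff (r - k + r) * z) := by
  split_ifs with hk0
  · simp [hk0, sect_of_natDegree_lt hr hf]
  · rw [sect_X_pow_mul_of_natDegree_lt hr hf (Nat.pos_of_ne_zero hk0) hk]
    simp

theorem isPhaseChain_aeval_sect {z : ℂ} (hz : 0 < z.im) (hnn : ∀ i, 0 ≤ f.coeff i)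
    (hcross : ∀ u v, u ≤ v → f.coeff (v + r) * f.coeff u ≤ f.coeff v * f.coeff (u + r)) :
    IsPhaseChain z r fun k => aeval z (sect r 0 (X ^ k * f)) := by
  obtain ⟨α, hα, hαz, hαW⟩ :=
    exists_antitone_onRay (w := fun u => f.coeff u + f.coeff (u + r) * z)
    (arg_pos_of_im_pos hz).le (fun u hu => arg_ofReal_add_ofReal_mul_mem_Icc hz (hnn u) (hnn _) hu)
    (fun u v huv hu hv => arg_ofReal_add_ofReal_mul_le_arg hz (hnn v) (hnn _) (hnn u) (hnn _)
      (hcross u v huv) hv hu)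
  refine ⟨fun k => if k = 0 then α 0 else α (r - k) + arg z, fun i hi j hj hij => ?_, ?_,
    fun k hk => ?_⟩
  · dsimp only
    split_ifs with hi0 hj0 hj0
    · exact le_rfl
    · linarith [(hαz 0).2, (hαz (r - j)).1]
    · omega
    · linarith [hα (show r - j ≤ r - i by omega)]
  · dsimp only
    rw [if_pos rfl]
    split_ifs
    · linarith [(arg_pos_of_im_pos hz).le]
    · linarith [hα (Nat.zero_le (r - (r - 1)))]
  · dsimp only
    rw [aeval_sect_X_pow_mul_of_natDegree_lt hr hf z hk]
    split_ifs with hk0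
    · exact hαW 0
    · obtain ⟨ρ, hρ, hW⟩ := hαW (r - k)
      exact ⟨‖z‖ * ρ, by positivity, by rw [hW, mul_ofReal_mul_exp]⟩

theorem exists_aeval_sect_ne_zero {z : ℂ} (hz : z.im ≠ 0) (hf0 : f ≠ 0) :
    ∃ k < r, aeval z (sect r 0 (X ^ k * f)) ≠ 0 := by
  obtain ⟨u, hu, hWu⟩ : ∃ u < r, (f.coeff u + f.coeff (u + r) * z : ℂ) ≠ 0 := by
    refine ⟨f.natDegree % r, Nat.mod_lt _ hr, fun hW => leadingCoeff_ne_zero.2 hf0 ?_⟩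
    obtain ⟨h1, h2⟩ := ofReal_add_ofReal_mul_eq_zero hz hW
    rcases lt_or_ge f.natDegree r with h | h
    · rwa [Nat.mod_eq_of_lt h] at h1
    · rwa [Nat.mod_eq_sub_mod h, Nat.mod_eq_of_lt (by omega), Nat.sub_add_cancel h] at h2
  rcases Nat.eq_zero_or_pos u with rfl | hu0
  · exact ⟨0, hr, by rwa [aeval_sect_X_pow_mul_of_natDegree_lt hr hf z hr, if_pos rfl]⟩
  · refine ⟨r - u, by omega, ?_⟩
    rw [aeval_sect_X_pow_mul_of_natDegree_lt hr hf z (by omega), if_neg (by omega),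
      Nat.sub_sub_self hu.le]
    exact mul_ne_zero (fun h => by simp [h] at hz) hWu

end Base

theorem realRooted_of_forall_im_pos {f : ℝ[X]} (h : ∀ z : ℂ, 0 < z.im → aeval z f ≠ 0) :
    RealRooted f := by
  refine Or.inr fun z hz => ?_
  by_contra him
  rcases lt_or_gt_of_ne him with hneg | hpos
  · exact h (conj z) (by simpa using hneg) (by rw [aeval_conj, hz, map_zero])
  · exact h z hpos hz

theorem realRooted_of_natDegree_le_one {f : ℝ[X]} (hf : f.natDegree ≤ 1) : RealRooted f := by
  rcases eq_or_ne f 0 with rfl | hf0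
  · exact Or.inl rfl
  refine realRooted_of_forall_im_pos fun z hz hroot => hf0 ?_
  rw [eq_X_add_C_of_natDegree_le_one hf] at hroot ⊢
  obtain ⟨h0, h1⟩ := ofReal_add_ofReal_mul_eq_zero hz.ne' (a := f.coeff 0) (b := f.coeff 1)
    (by rw [← hroot]; simp; ring)
  simp [h0, h1]

theorem realRooted_Uop {r : ℕ} (hr : 0 < r) {f : ℝ[X]} (hf : f.natDegree < 2 * r)
    (hnn : ∀ i, 0 ≤ f.coeff i)
    (hcross : ∀ u v, u ≤ v → f.coeff (v + r) * f.coeff u ≤ f.coeff v * f.coeff (u + r))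
    (m : ℕ) :
    RealRooted (Uop r m f) := by
  rcases m with _ | m
  · rw [Uop, pow_zero, mul_one, sect_of_natDegree_lt hr hf, add_comm]
    exact realRooted_of_natDegree_le_one natDegree_linear_le
  rcases eq_or_ne f 0 with rfl | hf0
  · left; simp [Uop, sect]
  refine realRooted_of_forall_im_pos fun z hz => ?_
  set v : ℕ → ℕ → ℂ := fun m k => aeval z (sect r 0 (X ^ k * (f * geomPoly r ^ m)))
    with hv
  have hrec : ∀ m, ∀ k < r, sectionStep z r (v m) k = v (m + 1) k := by
    intro m k hk
    simp only [hv]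
    rw [pow_succ, ← mul_assoc f, sect_X_pow_mul_mul_geomPoly hr hk.le]
    simp [sectionStep]
  have key : ∀ m, IsPhaseChain z r (v m) ∧ ∃ k < r, v m k ≠ 0 := by
    intro m
    induction m with
    | zero =>
      simpa [hv] using ⟨isPhaseChain_aeval_sect hr hf hz hnn hcross,
        exists_aeval_sect_ne_zero hr hf hz.ne' hf0⟩
    | succ m ih =>
      obtain ⟨hc, hne⟩ := ih.1.step hz ih.2
      exact ⟨hc.congr (hrec m), 0, hr, hrec m 0 hr ▸ hne 0 hr⟩
  obtain ⟨-, hne⟩ := (key m).1.step hz (key m).2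
  have := hrec m 0 hr ▸ hne 0 hr
  simpa [hv, Uop] using this

theorem statement7_general (d s : ℕ) (h : ℝ[X]) (hdeg : h.natDegree = s)
    (hnn : ∀ i, 0 ≤ h.coeff i) (hsmall : 2 * s ≤ d + 1)
    (r : ℕ) (hr : d + 1 ≤ 2 * r)
    (pt qt : ℝ[X]) (hpq : IsSymmDecomp d (Uop r (d + 1) h) pt qt) :
    RealRooted pt := by
  have hr0 : 0 < r := by omega
  rw [hpq.eq_Uop_symmetrization hr0 (hdeg ▸ hsmall)]
  exact realRooted_Uop hr0 ((natDegree_symmetrization_le d h).trans_lt (by omega))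
    (coeff_symmetrization_nonneg hnn) (fun u v huv => coeff_symmetrization_cross hnn hr huv) d

/-- If `h` has degree `s ≤ d`, nonnegative coefficients, satisfies
Property (H), and `2s ≤ d+1`, then the first part `p̃` of the symmetric decomposition of
`U_r^{d+1} h` is real-rooted for every `r` with `2r ≥ d+1`. -/
theorem statement7 (d s : ℕ) (h : ℝ[X]) (hne : h ≠ 0) (hdeg : h.natDegree = s)
    (hsd : s ≤ d) (hnn : ∀ i, 0 ≤ h.coeff i) (hH : PropH d h) (hsmall : 2 * s ≤ d + 1)
    (r : ℕ) (hr : d + 1 ≤ 2 * r)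
    (pt qt : ℝ[X]) (hpq : IsSymmDecomp d (Uop r (d + 1) h) pt qt) :
    RealRooted pt :=
  statement7_general d s h hdeg hnn hsmall r hr pt qt hpq
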